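/- arXiv:1804.09657 — 3 statements merged into one kernel-verified Lean document; each statement's English description precedes it below -/
import Mathlib

section
/- Let γ ≥ 1, T ≥ 1, let τ be a stopping time of (F_t), and let c ≥ 0 be a constant. If c·1{τ ≥ γ} ≤ P_γ(τ = γ | F_{γ−1}) holds P_γ-almost surely (where P_γ(· | F_{γ−1}) denotes conditional probability given F_{γ−1}), then c·P∞(τ ≥ γ) ≤ E∞[ℓ(X_γ)·1{τ = γ}]. -/
/-!
With independent coordinates, `P∞` and `P_γ` are the product measures `infinitePi` of their
marginals. Both events are determined by the first `γ` coordinates: `{τ ≥ γ}` by the first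
`γ - 1`, on which the two products agree, and `{τ = γ}` by the first `γ`, on which `P_γ` is
`P∞` reweighted by the density `ℓ(X_γ)`. Integrating the hypothesis gives
`c P_γ(τ ≥ γ) ≤ P_γ(τ = γ)`, and these two changes of measure turn it into the claim.
-/

open MeasureTheory ProbabilityTheory

/-- The natural filtration `F_t = σ(X_1, …, X_t)` on the sequence space. -/
def natF (E : Type*) [MeasurableSpace E] (t : ℕ) : MeasurableSpace (ℕ → E) :=
  ⨆ i ∈ Finset.Icc 1 t, MeasurableSpace.comap (fun ω : ℕ → E => ω i) inferInstance

open Set Filtration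
open scoped ENNReal

section InfinitePi

variable {ι : Type*} {X : ι → Type*} [∀ i, MeasurableSpace (X i)]

lemma ProbabilityTheory.iIndepFun.eq_infinitePi_map_eval {P : Measure (∀ i, X i)}
    (hP : iIndepFun (fun i (ω : ∀ i, X i) => ω i) P) :
    P = Measure.infinitePi (fun i => P.map (fun ω => ω i)) := by
  simpa using hP.map_fun_eq_infinitePi_map measurable_pi_apply

lemma MeasureTheory.Measure.infinitePi_apply_eq_of_measurableSet_piFinset
    {μ ν : ∀ i, Measure (X i)} [∀ i, IsProbabilityMeasure (μ i)]
    [∀ i, IsProbabilityMeasure (ν i)] {s : Finset ι}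
    (hμν : ∀ i ∈ s, μ i = ν i) {A : Set (∀ i, X i)} (hA : MeasurableSet[piFinset s] A) :
    Measure.infinitePi μ A = Measure.infinitePi ν A := by
  obtain ⟨B, hB, rfl⟩ := hA
  rw [← Measure.map_apply (Finset.measurable_restrict s) hB,
    ← Measure.map_apply (Finset.measurable_restrict s) hB,
    Measure.infinitePi_map_restrict, Measure.infinitePi_map_restrict,
    show (fun i : s => μ i) = fun i : s => ν i from funext fun i => hμν i i.2]

lemma MeasureTheory.Measure.infinitePi_withDensity_prod {μ : ∀ i, Measure (X i)}
    [∀ i, IsProbabilityMeasure (μ i)] {s : Finset ι} {f : ∀ i, X i → ℝ≥0∞}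
    (hf : ∀ i, Measurable (f i)) (hf_one : ∀ i ∉ s, f i = 1)
    [∀ i, IsProbabilityMeasure ((μ i).withDensity (f i))] :
    (Measure.infinitePi μ).withDensity (fun ω => ∏ i ∈ s, f i (ω i))
      = Measure.infinitePi (fun i => (μ i).withDensity (f i)) := by
  classical
  refine Measure.eq_infinitePi _ fun u t ht => ?_
  set t' : ∀ i, Set (X i) := fun i => if i ∈ u then t i else univ
  have ht' : ∀ i, MeasurableSet (t' i) := fun i => by
    by_cases hi : i ∈ u <;> simp [t', hi, ht i]
  have hbox : Set.pi ↑u t = Set.pi ↑(u ∪ s) t' := by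
    ext ω
    simp only [Set.mem_pi, Finset.coe_union, Set.mem_union, Finset.mem_coe, t']
    constructor
    · rintro h i (hi | hi) <;> by_cases hiu : i ∈ u <;> simp [hiu, h]
    · intro h i hi
      simpa [hi] using h i (Or.inl hi)
  -- On the enlarged box `u ∪ s` the integrand is a product of functions of single coordinates.
  have hdensity : (Set.pi ↑(u ∪ s) t').indicator (fun ω => ∏ i ∈ s, f i (ω i))
      = fun ω => ∏ i ∈ u ∪ s, (t' i).indicator (f i) (ω i) := by
    funext ω
    by_cases hω : ω ∈ Set.pi ↑(u ∪ s) t'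
    · rw [indicator_of_mem hω, Finset.prod_congr rfl fun i hi => indicator_of_mem (hω i hi) _]
      exact Finset.prod_subset Finset.subset_union_right fun i _ hi => by simp [hf_one i hi]
    · obtain ⟨i, hi, hωi⟩ := not_forall₂.1 hω
      rw [indicator_of_notMem hω]
      exact (Finset.prod_eq_zero hi (indicator_of_notMem hωi _)).symm
  rw [withDensity_apply _ (.pi u.countable_toSet fun i _ => ht i), hbox,
    ← lintegral_indicator (.pi (u ∪ s).countable_toSet fun i _ => ht' i),
    hdensity, lintegral_prod_eq_prod_lintegral_of_indepFun _ _
      (iIndepFun_infinitePi fun i => (hf i).indicator (ht' i))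
      fun i => ((hf i).indicator (ht' i)).comp (measurable_pi_apply i)]
  calc ∏ i ∈ u ∪ s, ∫⁻ ω, (t' i).indicator (f i) (ω i) ∂Measure.infinitePi μ
      = ∏ i ∈ u ∪ s, (μ i).withDensity (f i) (t' i) := Finset.prod_congr rfl fun i _ => by
        rw [(measurePreserving_eval_infinitePi μ i).lintegral_comp ((hf i).indicator (ht' i)),
          lintegral_indicator (ht' i), withDensity_apply _ (ht' i)]
    _ = ∏ i ∈ u, (μ i).withDensity (f i) (t' i) :=
        (Finset.prod_subset Finset.subset_union_left fun i _ hi => by simp [t', hi]).symm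
    _ = ∏ i ∈ u, (μ i).withDensity (f i) (t i) :=
        Finset.prod_congr rfl fun i hi => by simp [t', hi]

lemma MeasureTheory.Measure.infinitePi_withDensity_rnDeriv_eval [DecidableEq ι]
    {E : Type*} [MeasurableSpace E] {μ0 μ1 : Measure E} [IsProbabilityMeasure μ0]
    [IsProbabilityMeasure μ1] (hac : μ1 ≪ μ0)
    (j : ι) :
    (Measure.infinitePi fun _ : ι => μ0).withDensity (fun ω => μ1.rnDeriv μ0 (ω j))
      = Measure.infinitePi (fun i => if i = j then μ1 else μ0) := by
  have hf : ∀ i, μ0.withDensity (if i = j then μ1.rnDeriv μ0 else 1)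
      = if i = j then μ1 else μ0 := fun i => by
    split_ifs
    exacts [Measure.withDensity_rnDeriv_eq μ1 μ0 hac, withDensity_one]
  have : ∀ i, IsProbabilityMeasure (μ0.withDensity (if i = j then μ1.rnDeriv μ0 else 1)) :=
    fun i => by rw [hf]; infer_instance
  have key := Measure.infinitePi_withDensity_prod (μ := fun _ => μ0) (s := {j})
    (f := fun i => if i = j then μ1.rnDeriv μ0 else 1)
    (fun i => by split_ifs <;> fun_prop) (fun i hi => if_neg (Finset.notMem_singleton.1 hi))
  simpa only [hf, Finset.prod_singleton, if_pos] using key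

end InfinitePi

section StoppingTime

variable {Ω : Type*} {F : ℕ → MeasurableSpace Ω} {τ : Ω → ℕ∞}

lemma measurableSet_succ_le_of_measurableSet_le
    (hτ : ∀ t : ℕ, MeasurableSet[F t] {ω | τ ω ≤ t}) (k : ℕ) :
    MeasurableSet[F k] {ω | ((k + 1 : ℕ) : ℕ∞) ≤ τ ω} := by
  convert (hτ k).compl using 1
  ext ω
  simpa using ENat.add_one_le_iff (ENat.natCast_ne_top k)

lemma measurableSet_eq_succ_of_measurableSet_le (hF : Monotone F)
    (hτ : ∀ t : ℕ, MeasurableSet[F t] {ω | τ ω ≤ t}) (k : ℕ) :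
    MeasurableSet[F (k + 1)] {ω | τ ω = ((k + 1 : ℕ) : ℕ∞)} := by
  convert (hτ (k + 1)).inter (hF k.le_succ _ (measurableSet_succ_le_of_measurableSet_le hτ k))
    using 1
  ext ω
  exact le_antisymm_iff

end StoppingTime

lemma natF_le_piFinset (E : Type*) [MeasurableSpace E] (t : ℕ) :
    natF E t ≤ piFinset (X := fun _ => E) (Finset.Icc 1 t) :=
  iSup₂_le fun i hi => MeasurableSpace.comap_le_iff_le_map.2 fun A hA =>
    ⟨(fun x : Finset.Icc 1 t → E => x ⟨i, hi⟩) ⁻¹' A, measurable_pi_apply _ hA, rfl⟩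

lemma natF_mono (E : Type*) [MeasurableSpace E] : Monotone (natF E) :=
  fun _ _ h => biSup_mono fun _ hi => Finset.Icc_subset_Icc_right h hi

lemma ofReal_mul_measure_le_of_ae_le_condExp {Ω : Type*} {m m₀ : MeasurableSpace Ω}
    {P : Measure[m₀] Ω} [IsFiniteMeasure P] (hm : m ≤ m₀) {A B : Set Ω}
    (hA : MeasurableSet[m₀] A) (hB : MeasurableSet[m₀] B) {c : ℝ}
    (h : ∀ᵐ ω ∂P, c * A.indicator (fun _ => (1 : ℝ)) ω ≤ P[B.indicator (fun _ => 1) | m] ω) :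
    ENNReal.ofReal c * P A ≤ P B := by
  have hint := integral_mono_ae (((integrable_const (1 : ℝ)).indicator hA).const_mul c)
    integrable_condExp h
  rw [integral_condExp hm, integral_const_mul, integral_indicator_const _ hA,
    integral_indicator_const _ hB, smul_eq_mul, smul_eq_mul, mul_one, mul_one] at hint
  simpa [ENNReal.ofReal_mul' measureReal_nonneg, ofReal_measureReal]
    using ENNReal.ofReal_le_ofReal hint

theorem stmt_3_general
    {E : Type*} [MeasurableSpace E]
    (μ0 μ1 : Measure E) [IsProbabilityMeasure μ0] [IsProbabilityMeasure μ1]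
    (hac : μ1 ≪ μ0)
    (T : ℕ) (hT : 1 ≤ T) (γ : ℕ) (hγ : 1 ≤ γ)
    (Pinf Pγ : Measure (ℕ → E))
    [IsProbabilityMeasure Pinf] [IsProbabilityMeasure Pγ]
    (hPinf_indep :
      iIndepFun (m := fun _ : ℕ => (inferInstance : MeasurableSpace E))
        (fun t (ω : ℕ → E) => ω t) Pinf)
    (hPinf_marg : ∀ t : ℕ, Pinf.map (fun ω => ω t) = μ0)
    (hPγ_indep :
      iIndepFun (m := fun _ : ℕ => (inferInstance : MeasurableSpace E))
        (fun t (ω : ℕ → E) => ω t) Pγ)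
    (hPγ_marg : ∀ t : ℕ,
      Pγ.map (fun ω => ω t) = if γ ≤ t ∧ t < γ + T then μ1 else μ0)
    (τ : (ℕ → E) → ℕ∞)
    (hτ_stop : ∀ t : ℕ, MeasurableSet[natF E t] {ω | τ ω ≤ (t : ℕ∞)})
    (c : ℝ)
    (hc : ∀ᵐ ω ∂Pγ,
      c * ({ω' | (γ : ℕ∞) ≤ τ ω'}.indicator (fun _ => (1 : ℝ)) ω)
        ≤ (Pγ[{ω' | τ ω' = (γ : ℕ∞)}.indicator (fun _ => (1 : ℝ)) |
            natF E (γ - 1)]) ω) :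
    ENNReal.ofReal c * Pinf {ω | (γ : ℕ∞) ≤ τ ω}
      ≤ ∫⁻ ω in {ω | τ ω = (γ : ℕ∞)}, μ1.rnDeriv μ0 (ω γ) ∂Pinf := by
  obtain ⟨k, rfl⟩ : ∃ k, γ = k + 1 := ⟨γ - 1, by omega⟩
  rw [Nat.add_sub_cancel] at hc
  have hPinf : Pinf = Measure.infinitePi (fun _ => μ0) :=
    hPinf_indep.eq_infinitePi_map_eval.trans (by simp_rw [hPinf_marg])
  have hPγ : Pγ = Measure.infinitePi (fun t => if k + 1 ≤ t ∧ t < k + 1 + T then μ1 else μ0) :=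
    hPγ_indep.eq_infinitePi_map_eval.trans (by simp_rw [hPγ_marg])
  have hS₁ := natF_le_piFinset E k _ (measurableSet_succ_le_of_measurableSet_le hτ_stop k)
  have hS₂ := natF_le_piFinset E (k + 1) _
    (measurableSet_eq_succ_of_measurableSet_le (natF_mono E) hτ_stop k)
  calc ENNReal.ofReal c * Pinf {ω | ((k + 1 : ℕ) : ℕ∞) ≤ τ ω}
      = ENNReal.ofReal c * Pγ {ω | ((k + 1 : ℕ) : ℕ∞) ≤ τ ω} := by
        rw [hPinf, hPγ]
        congr 1
        exact Measure.infinitePi_apply_eq_of_measurableSet_piFinset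
          (fun i hi => by simp [(Finset.mem_Icc.1 hi).2]) hS₁
    _ ≤ Pγ {ω | τ ω = ((k + 1 : ℕ) : ℕ∞)} :=
        ofReal_mul_measure_le_of_ae_le_condExp ((natF_le_piFinset E k).trans (piFinset.le _))
          (piFinset.le _ _ hS₁) (piFinset.le _ _ hS₂) hc
    _ = Measure.infinitePi (fun t => if t = k + 1 then μ1 else μ0)
          {ω | τ ω = ((k + 1 : ℕ) : ℕ∞)} := by
        rw [hPγ]
        refine Measure.infinitePi_apply_eq_of_measurableSet_piFinset (fun i hi => ?_) hS₂
        have hik := (Finset.mem_Icc.1 hi).2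
        split_ifs <;> first | rfl | (exfalso; omega)
    _ = ∫⁻ ω in {ω | τ ω = ((k + 1 : ℕ) : ℕ∞)}, μ1.rnDeriv μ0 (ω (k + 1)) ∂Pinf := by
        rw [← Measure.infinitePi_withDensity_rnDeriv_eval hac, hPinf,
          withDensity_apply _ (piFinset.le _ _ hS₂)]

theorem stmt_3
    {E : Type*} [MeasurableSpace E]
    (μ0 μ1 : Measure E) [IsProbabilityMeasure μ0] [IsProbabilityMeasure μ1]
    (hac : μ1 ≪ μ0)
    (T : ℕ) (hT : 1 ≤ T) (γ : ℕ) (hγ : 1 ≤ γ)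
    (Pinf Pγ : Measure (ℕ → E))
    [IsProbabilityMeasure Pinf] [IsProbabilityMeasure Pγ]
    (hPinf_indep :
      iIndepFun (m := fun _ : ℕ => (inferInstance : MeasurableSpace E))
        (fun t (ω : ℕ → E) => ω t) Pinf)
    (hPinf_marg : ∀ t : ℕ, Pinf.map (fun ω => ω t) = μ0)
    (hPγ_indep :
      iIndepFun (m := fun _ : ℕ => (inferInstance : MeasurableSpace E))
        (fun t (ω : ℕ → E) => ω t) Pγ)
    (hPγ_marg : ∀ t : ℕ,
      Pγ.map (fun ω => ω t) = if γ ≤ t ∧ t < γ + T then μ1 else μ0)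
    (τ : (ℕ → E) → ℕ∞)
    (hτ1 : ∀ ω, 1 ≤ τ ω)
    (hτ_stop : ∀ t : ℕ, MeasurableSet[natF E t] {ω | τ ω ≤ (t : ℕ∞)})
    (c : ℝ) (hc0 : 0 ≤ c)
    (hc : ∀ᵐ ω ∂Pγ,
      c * ({ω' | (γ : ℕ∞) ≤ τ ω'}.indicator (fun _ => (1 : ℝ)) ω)
        ≤ (Pγ[{ω' | τ ω' = (γ : ℕ∞)}.indicator (fun _ => (1 : ℝ)) |
            natF E (γ - 1)]) ω) :
    ENNReal.ofReal c * Pinf {ω | (γ : ℕ∞) ≤ τ ω}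
      ≤ ∫⁻ ω in {ω | τ ω = (γ : ℕ∞)}, μ1.rnDeriv μ0 (ω γ) ∂Pinf :=
  stmt_3_general μ0 μ1 hac T hT γ hγ Pinf Pγ hPinf_indep hPinf_marg hPγ_indep hPγ_marg τ hτ_stop c
    hc
end

section
/- (Theorem 1, Pollak-like criterion, single change-point.) Let T ≥ 1 and let τ be a stopping time of (F_t) with τ ≥ 1, P∞(τ < ∞) = 1, and 0 < E∞[τ] < ∞. Suppose c ≥ 0 is a constant such that for every γ ≥ 1, c·P∞(τ ≥ γ) ≤ P_γ(τ = γ). Then c·E∞[τ] ≤ E∞[ℓ(X_τ)], where the right-hand side is the (possibly infinite) integral of ℓ(X_τ) under P∞. In particular, inf_{γ≥1} P_γ(τ = γ | τ ≥ γ) ≤ E∞[ℓ(X_τ)] / E∞[τ]. -/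
/-!
Context: μ0, μ1 probability measures on E, μ1 ≪ μ0, ℓ := dμ1/dμ0.  Sequence
space Ω := ℕ → E, coordinates X_t ω = ω t.  For γ ≥ 1, `P γ` makes the
coordinates independent with X_t ~ μ1 for γ ≤ t ≤ γ+T−1 and X_t ~ μ0
otherwise; `Pinf` makes them i.i.d. ~ μ0, with expectation E∞.
F_t = σ(X_1,…,X_t), and a stopping time τ is ℕ≥1 ∪ {∞}-valued with
{τ ≤ t} ∈ F_t for all t.

STATEMENT 5 (Theorem 1, Pollak-like criterion, single change-point): if τ ≥ 1,
P∞(τ < ∞) = 1, 0 < E∞[τ] < ∞, and c ≥ 0 satisfies c·P∞(τ ≥ γ) ≤ P_γ(τ = γ) for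
every γ ≥ 1, then c·E∞[τ] ≤ E∞[ℓ(X_τ)] (possibly infinite integral).  In
particular, inf_{γ≥1} P_γ(τ = γ | τ ≥ γ) ≤ E∞[ℓ(X_τ)] / E∞[τ], where
P_γ(τ = γ | τ ≥ γ) := P_γ(τ = γ)/P_γ(τ ≥ γ), equal to 0 when P_γ(τ ≥ γ) = 0
(the ℝ≥0∞ convention 0/0 = 0 applies, as P_γ(τ = γ) ≤ P_γ(τ ≥ γ)).
-/

open MeasureTheory ProbabilityTheory
open scoped ENNReal NNReal

/-! Under `P∞` the coordinates form the product measure `⨂ μ0`, and under `P_γ` the product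
with `μ1` in the window `[γ, γ + T)`. On events depending only on coordinates `≤ γ`, `P_γ`
therefore differs from `P∞` only through the `γ`-th factor, i.e. it has density `ℓ(X_γ)`; in
particular `P_γ(τ = γ) = E∞[ℓ(X_γ); τ = γ]`, while `P_γ(τ ≥ γ) = P∞(τ ≥ γ)` since `{τ ≥ γ}`
depends only on coordinates `< γ`. Summing the hypothesis over `γ ≥ 1` and using
`E∞[τ] = ∑_{γ ≥ 1} P∞(τ ≥ γ)` gives `c E∞[τ] ≤ ∑_γ E∞[ℓ(X_γ); τ = γ] ≤ E∞[ℓ(X_τ)]`. The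
infimum of the conditional probabilities is itself an admissible `c`. -/

open Measure Filtration

namespace ProbabilityTheory

variable {ι E : Type*} [MeasurableSpace E]

theorem iIndepFun.eq_infinitePi_map_eval_s5 {P : Measure (ι → E)}
    (h : iIndepFun (fun i ω => ω i) P) : P = infinitePi (fun i => P.map (fun ω => ω i)) := by
  simpa using h.map_fun_eq_infinitePi_map (fun i => measurable_pi_apply i)

end ProbabilityTheory

namespace MeasureTheory.Measure

variable {ι E : Type*} [MeasurableSpace E] {μ ν : ι → Measure E}
  [∀ i, IsProbabilityMeasure (μ i)] [∀ i, IsProbabilityMeasure (ν i)]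

theorem infinitePi_apply_eq_of_eqOn {I : Set ι} (h : Set.EqOn μ ν I) {A : Set (ι → E)}
    (hA : MeasurableSet[MeasurableSpace.pi.comap I.domRestrict] A) :
    infinitePi μ A = infinitePi ν A := by
  obtain ⟨B, hB, rfl⟩ := hA
  rw [← map_apply (Set.measurable_restrict I) hB, ← map_apply (Set.measurable_restrict I) hB,
    infinitePi_map_restrict', infinitePi_map_restrict']
  congr 2
  exact funext fun i => h i.2

theorem withDensity_eval_infinitePi {γ : ι} {f : E → ℝ≥0∞} (hf : Measurable f)
    (hγ : ν γ = (μ γ).withDensity f) (hne : ∀ i ≠ γ, ν i = μ i) :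
    (infinitePi μ).withDensity (fun ω => f (ω γ)) = infinitePi ν := by
  classical
  refine eq_infinitePi ν fun s t ht => ?_
  set d : ι → E → ℝ≥0∞ := fun i => if i = γ then f else 1
  have hd : ∀ i, Measurable (d i) := fun i => by
    by_cases hi : i = γ <;> simp [d, hi, hf, measurable_one]
  have hν : ∀ i, ν i = (μ i).withDensity (d i) := fun i => by
    by_cases hi : i = γ
    · subst hi; simpa [d] using hγ
    · simpa [d, hi] using hne i hi
  -- Padding the box with `univ` at `γ` writes `1_{box} · f(ω γ)` as a product of functions of
  -- single coordinates, which independence of the coordinates integrates factor by factor.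
  set s' := insert γ s
  set t' : ι → Set E := fun i => if i ∈ s then t i else Set.univ
  have ht' : ∀ i, MeasurableSet (t' i) := fun i => by
    by_cases hi : i ∈ s <;> simp [t', hi, ht i]
  have hpi : Set.pi ↑s t = Set.pi ↑s' t' := by
    ext ω; simp +contextual [s', t']
  have hpt : ∀ ω : ι → E, (Set.pi ↑s' t').indicator (fun ω => f (ω γ)) ω
      = ∏ i ∈ s', (t' i).indicator (d i) (ω i) := by
    intro ω
    by_cases hω : ω ∈ Set.pi ↑s' t'
    · rw [Set.indicator_of_mem hω,
        Finset.prod_congr rfl fun i hi => Set.indicator_of_mem (hω i hi) _,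
        Finset.prod_eq_single_of_mem γ (Finset.mem_insert_self γ s) fun i _ hi => by simp [d, hi]]
      simp [d]
    · obtain ⟨i, hi, hωi⟩ : ∃ i ∈ s', ω i ∉ t' i := by simpa [Set.mem_pi] using hω
      rw [Set.indicator_of_notMem hω, Finset.prod_eq_zero hi (Set.indicator_of_notMem hωi _)]
  calc (infinitePi μ).withDensity (fun ω => f (ω γ)) (Set.pi ↑s t)
      = ∫⁻ ω, ∏ i ∈ s', (t' i).indicator (d i) (ω i) ∂infinitePi μ := by
        rw [hpi, withDensity_apply _ (.pi s'.countable_toSet fun i _ => ht' i),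
          ← lintegral_indicator (.pi s'.countable_toSet fun i _ => ht' i)]
        exact lintegral_congr hpt
    _ = ∏ i ∈ s', ν i (t' i) := by
        rw [lintegral_prod_eq_prod_lintegral_of_indepFun s' _
          (iIndepFun_infinitePi fun i => (hd i).indicator (ht' i))
          fun i => ((hd i).indicator (ht' i)).comp (measurable_pi_apply i)]
        refine Finset.prod_congr rfl fun i _ => ?_
        rw [(measurePreserving_eval_infinitePi μ i).lintegral_comp ((hd i).indicator (ht' i)),
          lintegral_indicator (ht' i), hν i, withDensity_apply _ (ht' i)]
    _ = ∏ i ∈ s, ν i (t i) := by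
        rw [← Finset.prod_subset (Finset.subset_insert γ s) fun i _ hi => by simp [t', hi]]
        exact Finset.prod_congr rfl fun i hi => by simp [t', hi]

end MeasureTheory.Measure

theorem ENat.toENNReal_eq_tsum_ite_lt (k : ℕ∞) :
    (k : ℝ≥0∞) = ∑' n : ℕ, if (n : ℕ∞) < k then 1 else 0 := by
  induction k using ENat.recTopCoe with
  | top => simp
  | coe m =>
    rw [tsum_eq_sum (s := Finset.range m) fun n hn => by simpa using hn]
    simp [Finset.sum_boole, Finset.filter_true_of_mem fun n hn => Finset.mem_range.mp hn]

namespace MeasureTheory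

variable {Ω : Type*} [MeasurableSpace Ω] {μ : Measure Ω} {τ : Ω → ℕ∞}

theorem lintegral_enat_eq_tsum_measure_lt (hτ : Measurable τ) :
    ∫⁻ ω, (τ ω : ℝ≥0∞) ∂μ = ∑' n : ℕ, μ {ω | (n : ℕ∞) < τ ω} := by
  have hmeas : ∀ n : ℕ, MeasurableSet {ω | (n : ℕ∞) < τ ω} :=
    fun n => hτ (MeasurableSet.of_discrete (s := Set.Ioi (n : ℕ∞)))
  simp_rw [ENat.toENNReal_eq_tsum_ite_lt]
  rw [lintegral_tsum fun n =>
    (Measurable.ite (hmeas n) measurable_const measurable_const).aemeasurable]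
  refine tsum_congr fun n => ?_
  rw [← lintegral_indicator_one (hmeas n)]
  simp only [Set.indicator_apply, Set.mem_ofPred_eq, Pi.one_apply]

theorem tsum_setLIntegral_eq_le_lintegral (hτ : Measurable τ) {g : ℕ → Ω → ℝ≥0∞}
    (hg : ∀ n, Measurable (g n)) :
    ∑' n : ℕ, ∫⁻ ω in {ω | τ ω = n}, g n ω ∂μ ≤ ∫⁻ ω, g (τ ω).toNat ω ∂μ := by
  have hmeas : ∀ n : ℕ, MeasurableSet {ω | τ ω = n} :=
    fun n => hτ (MeasurableSet.of_discrete (s := {(n : ℕ∞)}))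
  simp_rw [← lintegral_indicator (hmeas _)]
  rw [← lintegral_tsum fun n => ((hg n).indicator (hmeas n)).aemeasurable]
  refine lintegral_mono fun ω => ?_
  rw [tsum_eq_single (f := fun n : ℕ => {ω | τ ω = n}.indicator (g n) ω) (τ ω).toNat fun n hn =>
    Set.indicator_of_notMem (s := {ω | τ ω = n}) (fun h => hn (by simp [h.out])) _]
  exact Set.indicator_le_self _ _ ω

theorem mul_lintegral_le_lintegral_of_mul_measure_le (hτ : Measurable τ) {g : ℕ → Ω → ℝ≥0∞}
    (hg : ∀ n, Measurable (g n)) {c : ℝ≥0∞}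
    (hc : ∀ γ : ℕ, 1 ≤ γ → c * μ {ω | (γ : ℕ∞) ≤ τ ω} ≤ ∫⁻ ω in {ω | τ ω = γ}, g γ ω ∂μ) :
    c * ∫⁻ ω, (τ ω : ℝ≥0∞) ∂μ ≤ ∫⁻ ω, g (τ ω).toNat ω ∂μ := by
  have hsucc : ∀ n : ℕ, {ω | (n : ℕ∞) < τ ω} = {ω | ((n + 1 : ℕ) : ℕ∞) ≤ τ ω} := fun n => by
    ext ω; simp [Nat.cast_succ, ENat.add_one_le_iff (ENat.natCast_ne_top n)]
  calc c * ∫⁻ ω, (τ ω : ℝ≥0∞) ∂μ = ∑' n : ℕ, c * μ {ω | ((n + 1 : ℕ) : ℕ∞) ≤ τ ω} := by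
        rw [lintegral_enat_eq_tsum_measure_lt hτ, ← ENNReal.tsum_mul_left]
        simp_rw [hsucc]
    _ ≤ ∑' n : ℕ, ∫⁻ ω in {ω | τ ω = (n + 1 : ℕ)}, g (n + 1) ω ∂μ :=
        ENNReal.tsum_le_tsum fun n => hc (n + 1) (Nat.le_add_left 1 n)
    _ ≤ ∑' n : ℕ, ∫⁻ ω in {ω | τ ω = n}, g n ω ∂μ :=
        ENNReal.tsum_comp_le_tsum_of_injective (add_left_injective 1)
          fun n : ℕ => ∫⁻ ω in {ω | τ ω = n}, g n ω ∂μ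
    _ ≤ ∫⁻ ω, g (τ ω).toNat ω ∂μ := tsum_setLIntegral_eq_le_lintegral hτ hg

end MeasureTheory

section Changepoint

variable {E : Type*} [MeasurableSpace E] {μ0 μ1 : Measure E}
  [IsProbabilityMeasure μ0] [IsProbabilityMeasure μ1] {γ T : ℕ}

theorem infinitePi_changepoint_apply_of_lt {n : ℕ} (hn : n < γ) {A : Set (ℕ → E)}
    (hA : MeasurableSet[piLE n] A) :
    infinitePi (fun t => if γ ≤ t ∧ t < γ + T then μ1 else μ0) A = infinitePi (fun _ => μ0) A :=
  infinitePi_apply_eq_of_eqOn (fun t ht => if_neg fun h => by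
    have : t ≤ n := ht
    omega) hA

theorem infinitePi_changepoint_apply_eq_setLIntegral (hac : μ1 ≪ μ0) (hT : 1 ≤ T)
    {A : Set (ℕ → E)} (hA : MeasurableSet[piLE γ] A) :
    infinitePi (fun t => if γ ≤ t ∧ t < γ + T then μ1 else μ0) A
      = ∫⁻ ω in A, μ1.rnDeriv μ0 (ω γ) ∂infinitePi (fun _ => μ0) := by
  have hwindow : Set.EqOn (fun t => if γ ≤ t ∧ t < γ + T then μ1 else μ0)
      (fun t => if t = γ then μ1 else μ0) (Set.Iic γ) := fun t ht => by
    have : t ≤ γ := ht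
    by_cases h : t = γ <;> simp [h] <;> omega
  rw [infinitePi_apply_eq_of_eqOn hwindow hA, ← withDensity_apply _ (piLE.le γ _ hA),
    withDensity_eval_infinitePi (ν := fun t => if t = γ then μ1 else μ0)
      (Measure.measurable_rnDeriv μ1 μ0)
      (by simp [withDensity_rnDeriv_eq μ1 μ0 hac]) fun i hi => if_neg hi]

end Changepoint

theorem natF_le_piLE {E : Type*} [MeasurableSpace E] (t : ℕ) :
    natF E t ≤ piLE (X := fun _ => E) t :=
  iSup₂_le fun i hi => Measurable.comap_le (m₂ := inferInstance) <|
    (measurable_pi_apply (⟨i, (Finset.mem_Icc.mp hi).2⟩ : Set.Iic t)).comp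
      (Measurable.of_comap_le (f := Preorder.restrictLe t) le_rfl)

theorem stmt_5_general
    {E : Type*} [MeasurableSpace E]
    (μ0 μ1 : Measure E) [IsProbabilityMeasure μ0] [IsProbabilityMeasure μ1]
    (hac : μ1 ≪ μ0)
    (T : ℕ) (hT : 1 ≤ T)
    (Pinf : Measure (ℕ → E))
    (hPinf_indep :
      iIndepFun
        (fun t (ω : ℕ → E) => ω t) Pinf)
    (hPinf_marg : ∀ t : ℕ, Pinf.map (fun ω => ω t) = μ0)
    (P : ℕ → Measure (ℕ → E))
    (hP_indep : ∀ γ, 1 ≤ γ →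
      iIndepFun
        (fun t (ω : ℕ → E) => ω t) (P γ))
    (hP_marg : ∀ γ, 1 ≤ γ → ∀ t : ℕ,
      (P γ).map (fun ω => ω t) = if γ ≤ t ∧ t < γ + T then μ1 else μ0)
    (τ : (ℕ → E) → ℕ∞)
    (hτ_stop : ∀ t : ℕ, MeasurableSet[natF E t] {ω | τ ω ≤ (t : ℕ∞)})
    (hτ_pos : 0 < ∫⁻ ω, (τ ω : ℝ≥0∞) ∂Pinf)
    (hτ_int : ∫⁻ ω, (τ ω : ℝ≥0∞) ∂Pinf < ⊤)
    (c : ℝ≥0∞)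
    (hc : ∀ γ : ℕ, 1 ≤ γ →
      c * Pinf {ω | (γ : ℕ∞) ≤ τ ω} ≤ P γ {ω | τ ω = (γ : ℕ∞)}) :
    c * ∫⁻ ω, (τ ω : ℝ≥0∞) ∂Pinf
        ≤ ∫⁻ ω, μ1.rnDeriv μ0 (ω (τ ω).toNat) ∂Pinf ∧
      (⨅ γ : {n : ℕ // 1 ≤ n},
          P γ {ω | τ ω = (γ : ℕ∞)} / P γ {ω | ((γ : ℕ) : ℕ∞) ≤ τ ω})
        ≤ (∫⁻ ω, μ1.rnDeriv μ0 (ω (τ ω).toNat) ∂Pinf)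
            / ∫⁻ ω, (τ ω : ℝ≥0∞) ∂Pinf := by
  have hτ : IsStoppingTime piLE τ := fun t => natF_le_piLE t _ (hτ_stop t)
  have hτm : Measurable τ :=
    ENat.measurable_iff.2 fun n => piLE.le n _ (hτ.measurableSet_eq_of_countable n)
  have hPinf : Pinf = infinitePi (fun _ => μ0) := by
    simpa [hPinf_marg] using hPinf_indep.eq_infinitePi_map_eval_s5
  have hP : ∀ γ, 1 ≤ γ → P γ = infinitePi (fun t => if γ ≤ t ∧ t < γ + T then μ1 else μ0) :=
    fun γ hγ => by simpa [hP_marg γ hγ] using (hP_indep γ hγ).eq_infinitePi_map_eval_s5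
  have hdens : ∀ γ, 1 ≤ γ → P γ {ω | τ ω = γ}
      = ∫⁻ ω in {ω | τ ω = γ}, μ1.rnDeriv μ0 (ω γ) ∂Pinf := fun γ hγ => by
    rw [hP γ hγ, hPinf]
    exact infinitePi_changepoint_apply_eq_setLIntegral hac hT (hτ.measurableSet_eq_of_countable γ)
  have hpre : ∀ γ, 1 ≤ γ → P γ {ω | (γ : ℕ∞) ≤ τ ω} = Pinf {ω | (γ : ℕ∞) ≤ τ ω} := by
    intro γ hγ
    obtain ⟨n, rfl⟩ : ∃ n, γ = n + 1 := ⟨γ - 1, by omega⟩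
    have hset : {ω | ((n + 1 : ℕ) : ℕ∞) ≤ τ ω} = {ω | τ ω ≤ n}ᶜ := by
      ext ω; simp [Nat.cast_succ, ENat.add_one_le_iff (ENat.natCast_ne_top n)]
    rw [hP _ hγ, hPinf, hset]
    exact infinitePi_changepoint_apply_of_lt (lt_add_one n) (hτ n).compl
  have hbound : ∀ c' : ℝ≥0∞, (∀ γ : ℕ, 1 ≤ γ →
      c' * Pinf {ω | (γ : ℕ∞) ≤ τ ω} ≤ P γ {ω | τ ω = (γ : ℕ∞)}) →
      c' * ∫⁻ ω, (τ ω : ℝ≥0∞) ∂Pinf ≤ ∫⁻ ω, μ1.rnDeriv μ0 (ω (τ ω).toNat) ∂Pinf :=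
    fun c' hc' => mul_lintegral_le_lintegral_of_mul_measure_le hτm
      (fun n => (Measure.measurable_rnDeriv μ1 μ0).comp (measurable_pi_apply n))
      fun γ hγ => (hc' γ hγ).trans_eq (hdens γ hγ)
  refine ⟨hbound c hc, ?_⟩
  rw [ENNReal.le_div_iff_mul_le (.inl hτ_pos.ne') (.inl hτ_int.ne)]
  refine hbound _ fun γ hγ => ?_
  rw [← hpre γ hγ, mul_comm]
  have hinf := iInf_le (fun γ' : {n : ℕ // 1 ≤ n} =>
    P γ' {ω | τ ω = (γ' : ℕ∞)} / P γ' {ω | ((γ' : ℕ) : ℕ∞) ≤ τ ω}) ⟨γ, hγ⟩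
  exact (mul_le_mul_right hinf _).trans ENNReal.mul_div_le

theorem stmt_5
    {E : Type*} [MeasurableSpace E]
    (μ0 μ1 : Measure E) [IsProbabilityMeasure μ0] [IsProbabilityMeasure μ1]
    (hac : μ1 ≪ μ0)
    (T : ℕ) (hT : 1 ≤ T)
    (Pinf : Measure (ℕ → E)) [IsProbabilityMeasure Pinf]
    (hPinf_indep :
      iIndepFun
        (fun t (ω : ℕ → E) => ω t) Pinf)
    (hPinf_marg : ∀ t : ℕ, Pinf.map (fun ω => ω t) = μ0)
    (P : ℕ → Measure (ℕ → E))
    (hP_prob : ∀ γ, 1 ≤ γ → IsProbabilityMeasure (P γ))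
    (hP_indep : ∀ γ, 1 ≤ γ →
      iIndepFun
        (fun t (ω : ℕ → E) => ω t) (P γ))
    (hP_marg : ∀ γ, 1 ≤ γ → ∀ t : ℕ,
      (P γ).map (fun ω => ω t) = if γ ≤ t ∧ t < γ + T then μ1 else μ0)
    (τ : (ℕ → E) → ℕ∞)
    (hτ1 : ∀ ω, 1 ≤ τ ω)
    (hτ_stop : ∀ t : ℕ, MeasurableSet[natF E t] {ω | τ ω ≤ (t : ℕ∞)})
    (hτ_fin : Pinf {ω | τ ω ≠ ⊤} = 1)
    (hτ_pos : 0 < ∫⁻ ω, (τ ω : ℝ≥0∞) ∂Pinf)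
    (hτ_int : ∫⁻ ω, (τ ω : ℝ≥0∞) ∂Pinf < ⊤)
    (c : ℝ≥0∞)
    (hc : ∀ γ : ℕ, 1 ≤ γ →
      c * Pinf {ω | (γ : ℕ∞) ≤ τ ω} ≤ P γ {ω | τ ω = (γ : ℕ∞)}) :
    c * ∫⁻ ω, (τ ω : ℝ≥0∞) ∂Pinf
        ≤ ∫⁻ ω, μ1.rnDeriv μ0 (ω (τ ω).toNat) ∂Pinf ∧
      (⨅ γ : {n : ℕ // 1 ≤ n},
          P γ {ω | τ ω = (γ : ℕ∞)} / P γ {ω | ((γ : ℕ) : ℕ∞) ≤ τ ω})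
        ≤ (∫⁻ ω, μ1.rnDeriv μ0 (ω (τ ω).toNat) ∂Pinf)
            / ∫⁻ ω, (τ ω : ℝ≥0∞) ∂Pinf :=
  stmt_5_general μ0 μ1 hac T hT Pinf hPinf_indep hPinf_marg P hP_indep hP_marg τ hτ_stop hτ_pos
    hτ_int c hc
end

section
/- (Lagrangian verification bound for Lemma 3.) Let L_1 be integrable, let λ > 0, and let c be the unique real number with E[(L_1 − c)⁺] = λ. Then for every stopping time τ of the natural filtration (F_t) with τ ≥ 1, P(τ < ∞) = 1, E[τ] < ∞, and L_τ integrable, one has E[L_τ] − λ·E[τ] ≤ c. -/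
/-!
On `{τ < ∞}`, `(L_τ - c)⁺ ≤ ∑_{t < τ} (L_{t+1} - c)⁺`. The event `{t < τ} = {τ ≤ t}ᶜ` lies in
`F_t`, which is independent of `L_{t+1}`, so the `t`-th summand has expectation `λ · P(t < τ)`;
as `∑_t P(t < τ) = E[τ]`, this gives `E[L_τ] - c ≤ E[(L_τ - c)⁺] ≤ λ · E[τ]`. The same sum
shows that `E[τ] < ∞` forces `τ < ∞` almost surely.
-/

open MeasureTheory ProbabilityTheory
open scoped ENNReal NNReal

def natFil {Ω : Type*} (L : ℕ → Ω → ℝ) (t : ℕ) : MeasurableSpace Ω :=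
  ⨆ i ∈ Finset.Icc 1 t, MeasurableSpace.comap (L i) inferInstance

section StoppedSums

variable {Ω : Type*} {mΩ : MeasurableSpace Ω} {μ : Measure Ω}

theorem ENat.tsum_ite_natCast_lt (n : ℕ∞) :
    ∑' t : ℕ, (if (t : ℕ∞) < n then 1 else 0 : ℝ≥0∞) = n := by
  cases n with
  | top => simp [ENNReal.tsum_const_eq_top_of_ne_zero one_ne_zero]
  | coe k =>
    simp only [Nat.cast_lt]
    rw [tsum_eq_sum (s := Finset.range k) (by simp_all), Finset.sum_boole,
      Finset.filter_true_of_mem fun _ => Finset.mem_range.mp]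
    simp

theorem tsum_measure_natCast_lt_eq_lintegral {τ : Ω → ℕ∞}
    (hτ : ∀ t : ℕ, MeasurableSet {ω | (t : ℕ∞) < τ ω}) :
    ∑' t : ℕ, μ {ω | (t : ℕ∞) < τ ω} = ∫⁻ ω, (τ ω : ℝ≥0∞) ∂μ := by
  simp_rw [← lintegral_indicator_one (hτ _)]
  rw [← lintegral_tsum fun t => (measurable_one.indicator (hτ t)).aemeasurable]
  refine lintegral_congr fun ω => ?_
  rw [← ENat.tsum_ite_natCast_lt (τ ω)]
  simp [Set.indicator_apply]

theorem ae_ne_top_of_tsum_measure_natCast_lt_ne_top {τ : Ω → ℕ∞}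
    (h : ∑' t : ℕ, μ {ω | (t : ℕ∞) < τ ω} ≠ ∞) : ∀ᵐ ω ∂μ, τ ω ≠ ⊤ := by
  refine ae_iff.mpr <| nonpos_iff_eq_zero.mp <|
    ge_of_tendsto' (ENNReal.tendsto_atTop_zero_of_tsum_ne_top h) fun t : ℕ => measure_mono ?_
  intro ω (hω : ¬τ ω ≠ ⊤)
  show (t : ℕ∞) < τ ω
  simp [not_not.mp hω]

theorem lintegral_indicator_eq_measure_mul_of_indep {m₁ m₂ : MeasurableSpace Ω}
    (h₁ : m₁ ≤ mΩ) (h₂ : m₂ ≤ mΩ) (hind : Indep m₁ m₂ μ) {s : Set Ω}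
    (hs : MeasurableSet[m₁] s) {f : Ω → ℝ≥0∞} (hf : Measurable[m₂] f) :
    ∫⁻ ω, s.indicator f ω ∂μ = μ s * ∫⁻ ω, f ω ∂μ := by
  have hsf : s.indicator f = fun ω => s.indicator 1 ω * f ω := by
    funext ω; by_cases h : ω ∈ s <;> simp [h]
  have hs_one : Measurable[m₁] (s.indicator (1 : Ω → ℝ≥0∞)) :=
    (measurable_indicator_const_iff 1).mpr hs
  rw [hsf, lintegral_mul_eq_lintegral_mul_lintegral_of_independent_measurableSpace h₁ h₂ hind
    hs_one hf, lintegral_indicator_one (h₁ _ hs)]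

theorem lintegral_tsum_indicator_natCast_lt_eq_mul {ℱ 𝒢 : ℕ → MeasurableSpace Ω}
    (hℱ : ∀ t, ℱ t ≤ mΩ) (h𝒢 : ∀ t, 𝒢 t ≤ mΩ) (hind : ∀ t, Indep (ℱ t) (𝒢 t) μ)
    {Y : ℕ → Ω → ℝ≥0∞} (hY : ∀ t, Measurable[𝒢 t] (Y t)) {a : ℝ≥0∞}
    (hYa : ∀ t, ∫⁻ ω, Y t ω ∂μ = a) {τ : Ω → ℕ∞}
    (hτ : ∀ t : ℕ, MeasurableSet[ℱ t] {ω | (t : ℕ∞) < τ ω}) :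
    ∫⁻ ω, ∑' t : ℕ, {ω | (t : ℕ∞) < τ ω}.indicator (Y t) ω ∂μ
      = a * ∫⁻ ω, (τ ω : ℝ≥0∞) ∂μ := by
  have hτ_meas : ∀ t : ℕ, MeasurableSet {ω | (t : ℕ∞) < τ ω} := fun t => hℱ t _ (hτ t)
  rw [lintegral_tsum fun t => (((hY t).mono (h𝒢 t) le_rfl).indicator (hτ_meas t)).aemeasurable]
  simp_rw [lintegral_indicator_eq_measure_mul_of_indep (hℱ _) (h𝒢 _) (hind _) (hτ _) (hY _), hYa]
  rw [ENNReal.tsum_mul_right, mul_comm, tsum_measure_natCast_lt_eq_lintegral hτ_meas]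

theorem apply_toNat_le_tsum_indicator_natCast_lt (f : ℕ → Ω → ℝ≥0∞) {τ : Ω → ℕ∞} {ω : Ω}
    (hτ1 : 1 ≤ τ ω) (hτ : τ ω ≠ ⊤) :
    f (τ ω).toNat ω ≤ ∑' t : ℕ, {ω | (t : ℕ∞) < τ ω}.indicator (f (t + 1)) ω := by
  obtain ⟨k, hk⟩ := ENat.ne_top_iff_exists.mp hτ
  obtain ⟨t, rfl⟩ : ∃ t, k = t + 1 := ⟨k - 1, by rw [← hk] at hτ1; norm_cast at hτ1; omega⟩
  calc f (τ ω).toNat ω = {ω | (t : ℕ∞) < τ ω}.indicator (f (t + 1)) ω := by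
        rw [Set.indicator_of_mem (by rw [Set.mem_ofPred_eq, ← hk]; exact_mod_cast t.lt_succ_self),
          ← hk, ENat.toNat_natCast]
    _ ≤ _ := ENNReal.le_tsum t

end StoppedSums

section RealIntegrals

variable {α : Type*} {m : MeasurableSpace α} {μ : Measure α}

theorem integral_le_toReal_lintegral_ofReal (f : α → ℝ) :
    ∫ x, f x ∂μ ≤ (∫⁻ x, ENNReal.ofReal (f x) ∂μ).toReal := by
  by_cases hf : Integrable f μ
  · rw [integral_eq_lintegral_pos_part_sub_lintegral_neg_part hf]
    exact sub_le_self _ ENNReal.toReal_nonneg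
  · rw [integral_undef hf]
    exact ENNReal.toReal_nonneg

theorem integral_le_add_toReal_of_lintegral_ofReal_sub_le [IsProbabilityMeasure μ]
    {f : α → ℝ} (hf : Integrable f μ) {c : ℝ} {b : ℝ≥0∞} (hb : b ≠ ∞)
    (h : ∫⁻ x, ENNReal.ofReal (f x - c) ∂μ ≤ b) : ∫ x, f x ∂μ ≤ c + b.toReal := by
  have hsub : ∫ x, (f x - c) ∂μ ≤ b.toReal :=
    (integral_le_toReal_lintegral_ofReal _).trans (ENNReal.toReal_mono hb h)
  rw [integral_sub hf (integrable_const c), integral_const, probReal_univ, one_smul] at hsub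
  linarith

theorem toReal_lintegral_ofReal_eq_integral_max {f : α → ℝ} (hf : AEStronglyMeasurable f μ) :
    (∫⁻ x, ENNReal.ofReal (f x) ∂μ).toReal = ∫ x, max (f x) 0 ∂μ := by
  rw [integral_eq_lintegral_of_nonneg_ae (f := fun x => max (f x) 0)
    (ae_of_all _ fun x => le_max_right _ _) (hf.sup aestronglyMeasurable_const)]
  simp

end RealIntegrals

section NaturalFiltration

variable {Ω : Type*} {mΩ : MeasurableSpace Ω} {L : ℕ → Ω → ℝ}

theorem natFil_le (hL : ∀ n, 1 ≤ n → Measurable (L n)) (t : ℕ) : natFil L t ≤ mΩ :=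
  iSup₂_le fun i hi => (hL i (Finset.mem_Icc.mp hi).1).comap_le

theorem indep_natFil_comap_succ {μ : Measure Ω} (hL : ∀ n, 1 ≤ n → Measurable (L n))
    (hindep : iIndepFun (fun i : {n : ℕ // 1 ≤ n} => L i) μ) (t : ℕ) :
    Indep (natFil L t) (MeasurableSpace.comap (L (t + 1)) inferInstance) μ := by
  let m : {n : ℕ // 1 ≤ n} → MeasurableSpace Ω := fun i => MeasurableSpace.comap (L i) inferInstance
  have hdisj : Disjoint {i : {n : ℕ // 1 ≤ n} | (i : ℕ) ≤ t} {i | (i : ℕ) = t + 1} :=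
    Set.disjoint_left.mpr fun i (hi : (i : ℕ) ≤ t) (hi' : (i : ℕ) = t + 1) => by omega
  refine indep_of_indep_of_le_right (indep_of_indep_of_le_left
    (indep_iSup_of_disjoint (fun i : {n : ℕ // 1 ≤ n} => (hL i i.2).comap_le) hindep hdisj) ?_) ?_
  · exact iSup₂_le fun i hi => le_iSup₂ (f := fun i _ => m i)
      (⟨i, (Finset.mem_Icc.mp hi).1⟩ : {n : ℕ // 1 ≤ n}) (Finset.mem_Icc.mp hi).2
  · exact le_biSup m (show (⟨t + 1, Nat.le_add_left 1 t⟩ : {n : ℕ // 1 ≤ n}) ∈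
      {i : {n : ℕ // 1 ≤ n} | (i : ℕ) = t + 1} from rfl)

end NaturalFiltration

theorem stmt_11_general
    {Ω : Type*} [MeasurableSpace Ω] (P : Measure Ω) [IsProbabilityMeasure P]
    (L : ℕ → Ω → ℝ)
    (hmeas : ∀ n, 1 ≤ n → Measurable (L n))
    (hindep :
      iIndepFun
        (fun i : {n : ℕ // 1 ≤ n} => L i) P)
    (hident : ∀ n, 1 ≤ n → P.map (L n) = P.map (L 1))
    (lam : ℝ) (hlam : 0 < lam)
    (c : ℝ) (hc : ∫ ω, max (L 1 ω - c) 0 ∂P = lam)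
    (τ : Ω → ℕ∞)
    (hτ1 : ∀ ω, 1 ≤ τ ω)
    (hτ_stop : ∀ t : ℕ, MeasurableSet[natFil L t] {ω | τ ω ≤ (t : ℕ∞)})
    (hτ_int : ∫⁻ ω, (τ ω : ℝ≥0∞) ∂P < ⊤)
    (hLτ_int : Integrable (fun ω => L (τ ω).toNat ω) P) :
    (∫ ω, L (τ ω).toNat ω ∂P)
        - lam * (∫⁻ ω, (τ ω : ℝ≥0∞) ∂P).toReal ≤ c := by
  set a := ∫⁻ ω, ENNReal.ofReal (L 1 ω - c) ∂P
  have hg : Measurable fun x : ℝ => ENNReal.ofReal (x - c) := by fun_prop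
  have ha : a.toReal = lam :=
    hc ▸ toReal_lintegral_ofReal_eq_integral_max ((hmeas 1 le_rfl).sub_const c).aestronglyMeasurable
  have ha_ne_top : a ≠ ∞ := (ENNReal.toReal_pos_iff.mp (ha ▸ hlam)).2.ne
  have hY : ∀ t : ℕ, ∫⁻ ω, ENNReal.ofReal (L (t + 1) ω - c) ∂P = a := fun t => by
    rw [← lintegral_map hg (hmeas _ t.succ_pos), hident _ t.succ_pos,
      lintegral_map hg (hmeas 1 le_rfl)]
  have hstop : ∀ t : ℕ, MeasurableSet[natFil L t] {ω | (t : ℕ∞) < τ ω} := fun t => by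
    simpa only [Set.compl_ofPred, not_le] using (hτ_stop t).compl
  have hτ_fin : ∀ᵐ ω ∂P, τ ω ≠ ⊤ := ae_ne_top_of_tsum_measure_natCast_lt_ne_top <|
    (tsum_measure_natCast_lt_eq_lintegral fun t => natFil_le hmeas t _ (hstop t)).trans_ne
      hτ_int.ne
  have hwald : ∫⁻ ω, ENNReal.ofReal (L (τ ω).toNat ω - c) ∂P ≤ a * ∫⁻ ω, (τ ω : ℝ≥0∞) ∂P := by
    rw [← lintegral_tsum_indicator_natCast_lt_eq_mul (natFil_le hmeas)
      (fun t => (hmeas _ t.succ_pos).comap_le) (indep_natFil_comap_succ hmeas hindep)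
      (fun t => hg.comp (comap_measurable (L (t + 1)))) hY hstop]
    exact lintegral_mono_ae <| hτ_fin.mono fun ω hω =>
      apply_toNat_le_tsum_indicator_natCast_lt (fun n ω => ENNReal.ofReal (L n ω - c)) (hτ1 ω) hω
  have hbound := integral_le_add_toReal_of_lintegral_ofReal_sub_le hLτ_int
    (ENNReal.mul_ne_top ha_ne_top hτ_int.ne) hwald
  rw [ENNReal.toReal_mul, ha] at hbound
  linarith

theorem stmt_11
    {Ω : Type*} [MeasurableSpace Ω] (P : Measure Ω) [IsProbabilityMeasure P]
    (L : ℕ → Ω → ℝ)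
    (hmeas : ∀ n, 1 ≤ n → Measurable (L n))
    (hindep :
      iIndepFun
        (fun i : {n : ℕ // 1 ≤ n} => L i) P)
    (hident : ∀ n, 1 ≤ n → P.map (L n) = P.map (L 1))
    (hint : Integrable (L 1) P)
    (lam : ℝ) (hlam : 0 < lam)
    (c : ℝ) (hc : ∫ ω, max (L 1 ω - c) 0 ∂P = lam)
    (hc_uniq : ∀ c' : ℝ, (∫ ω, max (L 1 ω - c') 0 ∂P = lam) → c' = c)
    (τ : Ω → ℕ∞)
    (hτ1 : ∀ ω, 1 ≤ τ ω)
    (hτ_stop : ∀ t : ℕ, MeasurableSet[natFil L t] {ω | τ ω ≤ (t : ℕ∞)})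
    (hτ_fin : P {ω | τ ω ≠ ⊤} = 1)
    (hτ_int : ∫⁻ ω, (τ ω : ℝ≥0∞) ∂P < ⊤)
    (hLτ_int : Integrable (fun ω => L (τ ω).toNat ω) P) :
    (∫ ω, L (τ ω).toNat ω ∂P)
        - lam * (∫⁻ ω, (τ ω : ℝ≥0∞) ∂P).toReal ≤ c :=
  stmt_11_general P L hmeas hindep hident lam hlam c hc τ hτ1 hτ_stop hτ_int hLτ_int
end
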